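/- arXiv:2111.05229 — 4 statements merged into one kernel-verified Lean document; each statement's English description precedes it below -/
import Mathlib

section
/- Let A be a negative definite symmetric n×n integer matrix whose last diagonal entry is −1, and suppose the last row has exactly one other nonzero entry, equal to 1, in position k < n (i.e., the last vertex is a (−1)-framed leaf attached to vertex k). Let A' be the (n−1)×(n−1) matrix obtained from A by deleting the last row and column and adding 1 to the (k,k) entry. Then A' is negative definite. -/
open Matrix

/-- A matrix of integers is negative definite (tested with rational vectors). -/
def NegDefInt {m : ℕ} (M : Matrix (Fin m) (Fin m) ℤ) : Prop :=
  ∀ x : Fin m → ℚ, x ≠ 0 → x ⬝ᵥ (M.map (Int.cast : ℤ → ℚ)).mulVec x < 0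

lemma expand_quad {m : ℕ} (M : Matrix (Fin m) (Fin m) ℚ) (v : Fin m → ℚ) :
    v ⬝ᵥ M.mulVec v = ∑ i, ∑ j, v i * M i j * v j := by
  simp [dotProduct, mulVec, Finset.mul_sum, mul_assoc]

/-- Blowing down a `(-1)`-framed leaf of a negative definite intersection matrix
(deleting the last row/column and adding `1` to the `(k,k)` entry) gives a negative
definite matrix. -/
theorem stmt2 {n : ℕ} (A : Matrix (Fin (n + 1)) (Fin (n + 1)) ℤ)
    (hsym : A.IsSymm) (hneg : NegDefInt A)
    (hlast : A (Fin.last n) (Fin.last n) = -1)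
    (k : Fin n)
    (hk : A (Fin.last n) k.castSucc = 1)
    (hrow : ∀ j : Fin n, j ≠ k → A (Fin.last n) j.castSucc = 0) :
    NegDefInt (Matrix.of fun i j : Fin n =>
      A i.castSucc j.castSucc + if i = k ∧ j = k then 1 else 0) := by
  intro x hx
  classical
  set y : Fin (n + 1) → ℚ := Fin.snoc x (x k) with hy
  have hy0 : y ≠ 0 := by
    intro h
    apply hx
    funext i
    have := congrFun h i.castSucc
    simpa [hy, Fin.snoc_castSucc] using this
  have h := hneg y hy0
  have hsym' : ∀ j : Fin n, A j.castSucc (Fin.last n) = A (Fin.last n) j.castSucc := by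
    intro j
    exact (hsym.apply _ _).symm
  have hrowsum : ∀ i : Fin n, (fun j : Fin n => ((A (Fin.last n) j.castSucc : ℚ))) i *
      x i = (if i = k then 1 else 0) * x i := by
    intro i
    by_cases hik : i = k
    · subst hik; simp [hk]
    · simp [hrow i hik, hik]
  have key : x ⬝ᵥ ((Matrix.of fun i j : Fin n =>
      A i.castSucc j.castSucc + if i = k ∧ j = k then 1 else 0).map
      (Int.cast : ℤ → ℚ)).mulVec x = y ⬝ᵥ (A.map (Int.cast : ℤ → ℚ)).mulVec y := by
    rw [expand_quad, expand_quad]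
    rw [Fin.sum_univ_castSucc (f := fun i => ∑ j, y i * (A.map _) i j * y j)]
    have inner : ∀ i : Fin (n + 1),
        (∑ j, y i * (A.map (Int.cast : ℤ → ℚ)) i j * y j)
        = (∑ j : Fin n, y i * (A i j.castSucc : ℚ) * x j)
          + y i * (A i (Fin.last n) : ℚ) * x k := by
      intro i
      rw [Fin.sum_univ_castSucc (f := fun j => y i * (A.map _) i j * y j)]
      simp [hy, Fin.snoc_castSucc, Fin.snoc_last, Matrix.map_apply]
    simp only [inner]
    have hlastterm :
        (∑ j : Fin n, y (Fin.last n) * (A (Fin.last n) j.castSucc : ℚ) * x j)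
          + y (Fin.last n) * (A (Fin.last n) (Fin.last n) : ℚ) * x k
        = x k * x k - x k * x k := by
      have : ∀ j : Fin n, y (Fin.last n) * (A (Fin.last n) j.castSucc : ℚ) * x j
          = x k * ((if j = k then 1 else 0) * x j) := by
        intro j
        have := hrowsum j
        simp only at this
        rw [mul_assoc, this, hy, Fin.snoc_last]
      rw [Finset.sum_congr rfl (fun j _ => this j)]
      simp [hy, Fin.snoc_last, hlast, Finset.mul_sum]
    have colterm : ∀ i : Fin n,
        y i.castSucc * (A i.castSucc (Fin.last n) : ℚ) * x k
        = ((if i = k then 1 else 0) * x i) * x k := by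
      intro i
      have hi := hrowsum i
      simp only at hi
      rw [hsym' i, hy]
      simp only [Fin.snoc_castSucc]
      rw [mul_comm (x i) ((A (Fin.last n) i.castSucc : ℚ)), hi]
    rw [hlastterm]
    simp only [colterm, hy, Fin.snoc_castSucc, Matrix.map_apply, Matrix.of_apply]
    push_cast
    simp only [mul_add, add_mul, mul_ite, ite_mul, mul_one, one_mul, mul_zero, zero_mul,
      Finset.sum_add_distrib, Finset.sum_ite_eq', Finset.mem_univ, if_true, ite_and]
    simp [Finset.sum_ite_eq', mul_comm]
    have hc : ∀ i : Fin n, x k * (x i * (A i.castSucc (Fin.last n) : ℚ))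
        = x k * ((if i = k then 1 else 0) * x i) := by
      intro i
      have hi := hrowsum i
      simp only at hi
      rw [hsym' i, mul_comm (x i), hi]
    rw [Finset.sum_congr rfl (fun i _ => hc i)]
    simp [ite_mul, mul_ite, mul_zero, zero_mul, Finset.sum_ite_eq', sq]
  rw [key]
  exact h
end

section
/- Let f[K,I] = (K(Σ_{u∈I} u) + (Σ_{u∈I} u)²)/2 for subsets I of the vertex set of a plumbing graph, where K is a characteristic cohomology class. Suppose e is a vertex with e² = −1 adjacent to exactly two vertices v,w, K(e) ≤ −3, and E is a set of vertices not containing e. Then min{f[K, I∪{e}] : I ⊆ E} ≤ min{f[K, I] : I ⊆ E}. -/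
/-- `f[K,I] = (K(∑_{u∈I} u) + (∑_{u∈I} u)²) / 2`, where the intersection pairing of
basis vertices is `B` and `K` is given by its values on the vertices. -/
def fval {ι : Type*} [DecidableEq ι] (B : ι → ι → ℤ) (K : ι → ℤ) (I : Finset ι) : ℚ :=
  ((∑ u ∈ I, (K u : ℚ)) + ∑ u ∈ I, ∑ u' ∈ I, (B u u' : ℚ)) / 2

/-- If `e` is a `(-1)`-vertex adjacent exactly to `v` and `w`, `K` is characteristic with
`K(e) ≤ -3`, and `e ∉ E`, then `min{f[K,I∪{e}] : I ⊆ E} ≤ min{f[K,I] : I ⊆ E}`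
(i.e. `b_e[K, E∪e] = 0`). -/
theorem stmt7 {ι : Type*} [DecidableEq ι] (B : ι → ι → ℤ)
    (hsym : ∀ a b, B a b = B b a)
    (e v w : ι) (hev : e ≠ v) (hew : e ≠ w) (hvw : v ≠ w)
    (hee : B e e = -1) (hbev : B e v = 1) (hbew : B e w = 1)
    (hdeg : ∀ u, u ≠ e → u ≠ v → u ≠ w → B e u = 0)
    (K : ι → ℤ) (hchar : ∀ u, K u % 2 = B u u % 2) (hKe : K e ≤ -3)
    (E : Finset ι) (heE : e ∉ E) :
    E.powerset.inf' ⟨∅, Finset.empty_mem_powerset E⟩ (fun I => fval B K (insert e I))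
      ≤ E.powerset.inf' ⟨∅, Finset.empty_mem_powerset E⟩ (fun I => fval B K I) := by
  obtain ⟨I, hI, hEq⟩ := Finset.exists_mem_eq_inf' ⟨∅, Finset.empty_mem_powerset E⟩
    (fun I => fval B K I)
  rw [hEq]
  refine le_trans (Finset.inf'_le _ hI) ?_
  have heI : e ∉ I := fun h => heE (Finset.mem_powerset.mp hI h)
  -- bound on the sum of B e u over I
  have hS : (∑ u ∈ I, B e u) ≤ 2 := by
    have h1 : (∑ u ∈ I, B e u) ≤
        ∑ u ∈ I, ((if u = v then (1:ℤ) else 0) + (if u = w then 1 else 0)) := by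
      apply Finset.sum_le_sum
      intro u hu
      by_cases huv : u = v
      · subst huv; simp [hbev, hvw]
      · by_cases huw : u = w
        · subst huw; simp [hbew, huv]
        · have hue : u ≠ e := fun h => heI (h ▸ hu)
          rw [hdeg u hue huv huw]; split_ifs <;> omega
    rw [Finset.sum_add_distrib, Finset.sum_ite_eq' I v (fun _ => (1:ℤ)),
      Finset.sum_ite_eq' I w (fun _ => (1:ℤ))] at h1
    split_ifs at h1 <;> omega
  -- expand fval
  unfold fval
  rw [Finset.sum_insert heI, Finset.sum_insert heI, Finset.sum_insert heI]
  have hswap : ∀ u, ((B u e : ℚ)) = ((B e u : ℚ)) := fun u => by rw [hsym]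
  have hexp : ∀ u ∈ I, (∑ u' ∈ insert e I, (B u u' : ℚ))
      = (B e u : ℚ) + ∑ u' ∈ I, (B u u' : ℚ) := by
    intro u hu
    rw [Finset.sum_insert heI, hswap]
  rw [Finset.sum_congr rfl hexp, Finset.sum_add_distrib]
  have hSQ : (∑ u ∈ I, (B e u : ℚ)) ≤ 2 := by
    have := hS
    push_cast [← Int.cast_sum]
    exact_mod_cast hS
  have hKeQ : ((K e : ℚ)) ≤ -3 := by exact_mod_cast hKe
  have heeQ : ((B e e : ℚ)) = -1 := by exact_mod_cast hee
  rw [heeQ]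
  rw [div_le_div_iff_of_pos_right (by norm_num)]
  linarith
end

section
/- Let f[K,I] = (K(Σ_{u∈I} u) + (Σ_{u∈I} u)²)/2. In the edge blow-up lattice, where (K,p,q,l) denotes a characteristic element with values p on v, q on w, l on the (−1)-framed vertex e adjacent to v and w, and (K,p+l,q+l) the corresponding element on the blown-down lattice, the following hold for I with v,w ∉ I and e ∉ I: f[(K,p+l,q+l),I] = f[(K,p,q,l),I]; f[(K,p+l,q+l),I∪{v}] = f[(K,p,q,l),I∪{v}] + (l+1)/2; f[(K,p+l,q+l),I∪{w}] = f[(K,p,q,l),I∪{w}] + (l+1)/2; f[(K,p+l,q+l),I∪{v,w}] = f[(K,p,q,l),I∪{v,w}] + l + 2. -/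
/-- The intersection form after blowing up the edge between `v` and `w`:
the new vertex `e` is `none`, with `e² = -1`, `e·v = e·w = 1`; the framings of `v` and `w`
drop by one and the edge `v-w` is removed. -/
def blowUpForm {ι : Type*} [DecidableEq ι] (B : ι → ι → ℤ) (v w : ι) :
    Option ι → Option ι → ℤ
  | none, none => -1
  | none, some u => if u = v ∨ u = w then 1 else 0
  | some u, none => if u = v ∨ u = w then 1 else 0
  | some u, some u' =>
      B u u' - (if u = v ∧ u' = v then 1 else 0) - (if u = w ∧ u' = w then 1 else 0)
        - (if u = v ∧ u' = w then 1 else 0) - (if u = w ∧ u' = v then 1 else 0)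

/-- Comparison of `f` before and after the blow-down of the edge-blow-up vertex `e`:
`(K,p,q,l)` lives on the blown-up lattice and `(K,p+l,q+l)` on the original one. -/
theorem stmt8 {ι : Type*} [DecidableEq ι] (B : ι → ι → ℤ)
    (hsym : ∀ a b, B a b = B b a)
    (v w : ι) (hvw : v ≠ w) (hedge : B v w = 1)
    (K : ι → ℤ) (l : ℤ)
    (I : Finset ι) (hv : v ∉ I) (hw : w ∉ I) :
    (fval B (fun u => K u + (if u = v then l else 0) + (if u = w then l else 0)) I
        = fval (blowUpForm B v w) (fun x => x.elim l K) (I.image some)) ∧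
    (fval B (fun u => K u + (if u = v then l else 0) + (if u = w then l else 0)) (insert v I)
        = fval (blowUpForm B v w) (fun x => x.elim l K) (insert (some v) (I.image some))
          + ((l : ℚ) + 1) / 2) ∧
    (fval B (fun u => K u + (if u = v then l else 0) + (if u = w then l else 0)) (insert w I)
        = fval (blowUpForm B v w) (fun x => x.elim l K) (insert (some w) (I.image some))
          + ((l : ℚ) + 1) / 2) ∧
    (fval B (fun u => K u + (if u = v then l else 0) + (if u = w then l else 0))
        (insert v (insert w I))
        = fval (blowUpForm B v w) (fun x => x.elim l K)
            (insert (some v) (insert (some w) (I.image some))) + (l : ℚ) + 2) := by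
    classical
  have hne : ∀ u ∈ I, u ≠ v := fun u hu h => hv (h ▸ hu)
  have hnw : ∀ u ∈ I, u ≠ w := fun u hu h => hw (h ▸ hu)
  have hinj : ∀ x ∈ I, ∀ y ∈ I, (some x : Option ι) = some y → x = y := by
    intro x _ y _ h; exact Option.some_injective _ h
  set SK := ∑ u ∈ I, (K u : ℚ) with hSK
  set SB := ∑ u ∈ I, ∑ u' ∈ I, (B u u' : ℚ) with hSB
  set Rv := ∑ u ∈ I, (B v u : ℚ) with hRv
  set Rw := ∑ u ∈ I, (B w u : ℚ) with hRw
  set Cv := ∑ u ∈ I, (B u v : ℚ) with hCv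
  set Cw := ∑ u ∈ I, (B u w : ℚ) with hCw
  -- K' restricted to I equals K
  have hK : ∑ u ∈ I, ((K u + (if u = v then l else 0) + (if u = w then l else 0) : ℤ) : ℚ) = SK := by
    refine Finset.sum_congr rfl fun u hu => ?_
    simp [hne u hu, hnw u hu]
  -- values of the blown-up form
  have bvv : blowUpForm B v w (some v) (some v) = B v v - 1 := by
    simp [blowUpForm, hvw, hvw.symm]
  have bww : blowUpForm B v w (some w) (some w) = B w w - 1 := by
    simp [blowUpForm, hvw, hvw.symm]
  have bvw : blowUpForm B v w (some v) (some w) = B v w - 1 := by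
    simp [blowUpForm, hvw, hvw.symm]
  have bwv : blowUpForm B v w (some w) (some v) = B w v - 1 := by
    simp [blowUpForm, hvw, hvw.symm]
  have bII : ∀ u ∈ I, ∀ u' ∈ I, blowUpForm B v w (some u) (some u') = B u u' := by
    intro u hu u' hu'
    simp [blowUpForm, hne u hu, hnw u hu, hne u' hu', hnw u' hu']
  have bvI : ∀ u ∈ I, blowUpForm B v w (some v) (some u) = B v u := by
    intro u hu; simp [blowUpForm, hne u hu, hnw u hu]
  have bwI : ∀ u ∈ I, blowUpForm B v w (some w) (some u) = B w u := by
    intro u hu; simp [blowUpForm, hne u hu, hnw u hu]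
  have bIv : ∀ u ∈ I, blowUpForm B v w (some u) (some v) = B u v := by
    intro u hu; simp [blowUpForm, hne u hu, hnw u hu]
  have bIw : ∀ u ∈ I, blowUpForm B v w (some u) (some w) = B u w := by
    intro u hu; simp [blowUpForm, hne u hu, hnw u hu]
  -- image sums
  have hKim : ∑ x ∈ I.image some, (((x.elim l K : ℤ)) : ℚ) = SK := by
    rw [Finset.sum_image hinj]
    exact Finset.sum_congr rfl fun x _ => rfl
  have hrowIm : ∀ a : Option ι,
      ∑ x ∈ I.image some, (blowUpForm B v w a x : ℚ)
        = ∑ u ∈ I, (blowUpForm B v w a (some u) : ℚ) := by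
    intro a; rw [Finset.sum_image hinj]
  have hBim : ∑ x ∈ I.image some, ∑ y ∈ I.image some, (blowUpForm B v w x y : ℚ) = SB := by
    rw [Finset.sum_image hinj]
    refine Finset.sum_congr rfl fun u hu => ?_
    rw [hrowIm]
    exact Finset.sum_congr rfl fun u' hu' => by rw [bII u hu u' hu']
  have hvIm : ∑ x ∈ I.image some, (blowUpForm B v w (some v) x : ℚ) = Rv := by
    rw [hrowIm]; exact Finset.sum_congr rfl fun u hu => by rw [bvI u hu]
  have hwIm : ∑ x ∈ I.image some, (blowUpForm B v w (some w) x : ℚ) = Rw := by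
    rw [hrowIm]; exact Finset.sum_congr rfl fun u hu => by rw [bwI u hu]
  have hIvIm : ∑ u ∈ I, (blowUpForm B v w (some u) (some v) : ℚ) = Cv :=
    Finset.sum_congr rfl fun u hu => by rw [bIv u hu]
  have hIwIm : ∑ u ∈ I, (blowUpForm B v w (some u) (some w) : ℚ) = Cw :=
    Finset.sum_congr rfl fun u hu => by rw [bIw u hu]
  have hvim : (some v : Option ι) ∉ I.image some := by simp [hv]
  have hwim : (some w : Option ι) ∉ I.image some := by simp [hw]
  have hvwi : v ∉ insert w I := by simp [hvw, hv]
  have hvwim : (some v : Option ι) ∉ insert (some w) (I.image some) := by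
    simp [hvw, hv]
  -- rows over I
  have hKrow : ∀ u ∈ I,
      ∑ u' ∈ insert v I, (B u u' : ℚ) = (B u v : ℚ) + ∑ u' ∈ I, (B u u' : ℚ) := by
    intro u hu; rw [Finset.sum_insert hv]
  refine ⟨?_, ?_, ?_, ?_⟩
  · unfold fval
    rw [hK, hKim, hBim]
  · unfold fval
    rw [Finset.sum_insert hv, Finset.sum_insert hvim, Finset.sum_insert hv,
        Finset.sum_insert hvim, Finset.sum_insert hv, Finset.sum_insert hvim, hK, hKim,
        hvIm]
    have h1 : ∑ u ∈ I, ((B u v : ℚ) + ∑ u' ∈ I, (B u u' : ℚ)) = Cv + SB := by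
      rw [Finset.sum_add_distrib]
    have h2 : ∑ u ∈ I, ∑ u' ∈ insert v I, (B u u' : ℚ) = Cv + SB := by
      rw [← h1]; exact Finset.sum_congr rfl fun u hu => by rw [Finset.sum_insert hv]
    have h3 : ∑ x ∈ I.image some,
        ((blowUpForm B v w x (some v) : ℚ) + ∑ y ∈ I.image some, (blowUpForm B v w x y : ℚ))
        = Cv + SB := by
      rw [Finset.sum_add_distrib, hBim]
      congr 1
      rw [Finset.sum_image hinj, hIvIm]
    have h4 : ∑ x ∈ I.image some, ∑ y ∈ insert (some v) (I.image some),
        (blowUpForm B v w x y : ℚ) = Cv + SB := by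
      rw [← h3]
      exact Finset.sum_congr rfl fun x hx => by rw [Finset.sum_insert hvim]
    rw [h2, h4, bvv, ← hRv]
    simp only [Option.elim_some, if_neg hvw]
    push_cast
    ring
  · unfold fval
    rw [Finset.sum_insert hw, Finset.sum_insert hwim, Finset.sum_insert hw,
        Finset.sum_insert hwim, Finset.sum_insert hw, Finset.sum_insert hwim, hK, hKim,
        hwIm]
    have h1 : ∑ u ∈ I, ((B u w : ℚ) + ∑ u' ∈ I, (B u u' : ℚ)) = Cw + SB := by
      rw [Finset.sum_add_distrib]
    have h2 : ∑ u ∈ I, ∑ u' ∈ insert w I, (B u u' : ℚ) = Cw + SB := by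
      rw [← h1]; exact Finset.sum_congr rfl fun u hu => by rw [Finset.sum_insert hw]
    have h3 : ∑ x ∈ I.image some,
        ((blowUpForm B v w x (some w) : ℚ) + ∑ y ∈ I.image some, (blowUpForm B v w x y : ℚ))
        = Cw + SB := by
      rw [Finset.sum_add_distrib, hBim]
      congr 1
      rw [Finset.sum_image hinj, hIwIm]
    have h4 : ∑ x ∈ I.image some, ∑ y ∈ insert (some w) (I.image some),
        (blowUpForm B v w x y : ℚ) = Cw + SB := by
      rw [← h3]
      exact Finset.sum_congr rfl fun x hx => by rw [Finset.sum_insert hwim]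
    rw [h2, h4, bww, ← hRw]
    simp only [Option.elim_some, if_neg hvw.symm]
    push_cast
    ring
  · unfold fval
    simp only [Finset.sum_insert hvwi, Finset.sum_insert hw, Finset.sum_insert hvwim,
        Finset.sum_insert hwim]
    have h1 : ∑ u ∈ I, ((B u v : ℚ) + ((B u w : ℚ) + ∑ u' ∈ I, (B u u' : ℚ)))
        = Cv + (Cw + SB) := by
      rw [Finset.sum_add_distrib, Finset.sum_add_distrib]
    have h3 : ∑ x ∈ I.image some,
        ((blowUpForm B v w x (some v) : ℚ) + ((blowUpForm B v w x (some w) : ℚ)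
          + ∑ y ∈ I.image some, (blowUpForm B v w x y : ℚ)))
        = Cv + (Cw + SB) := by
      rw [Finset.sum_add_distrib, Finset.sum_add_distrib, hBim,
          Finset.sum_image hinj, Finset.sum_image hinj, hIvIm, hIwIm]
    rw [hK, hKim, hvIm, hwIm, bvv, bww, bvw, bwv, h1, h3, ← hRv, ← hRw]
    simp only [Option.elim_some, if_neg hvw, if_neg hvw.symm, if_pos rfl]
    push_cast
    ring
end

section
/- In the edge blow-up lattice, if v,w,e ∉ I then: f[(K,p+1,q+1,−1), I] = f[(K,p−1,q−1,1), I]; f[(K,p+1,q+1,−1), I∪{v}] = f[(K,p−1,q−1,1), I∪{v}] + 1; f[(K,p+1,q+1,−1), I∪{w}] = f[(K,p−1,q−1,1), I∪{w}] + 1; f[(K,p+1,q+1,−1), I∪{v,w}] = f[(K,p−1,q−1,1), I∪{v,w}] + 2. Consequently, if g[(K,p+1,q+1,−1),E] = g[(K,p−1,q−1,1),E] then every minimizer I of f[(K,p+1,q+1,−1),·] over subsets of E with e ∉ E satisfies v,w ∉ I. -/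
/-- `g[K,E] = min { f[K,I] : I ⊆ E }`. -/
def gval {ι : Type*} [DecidableEq ι] (B : ι → ι → ℤ) (K : ι → ℤ) (E : Finset ι) : ℚ :=
  E.powerset.inf' ⟨∅, Finset.empty_mem_powerset E⟩ (fval B K)

/-- Key lemma: the two characteristic vectors differ only in the linear part. -/
lemma key_diff {ι : Type*} [DecidableEq ι] (B : Option ι → Option ι → ℤ)
    (v w : ι) (K : ι → ℤ) (I : Finset (Option ι)) :
    fval B (fun x => x.elim (-1) (fun u =>
        K u + (if u = v then 1 else 0) + (if u = w then 1 else 0))) I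
      = fval B (fun x => x.elim 1 (fun u =>
        K u - (if u = v then 1 else 0) - (if u = w then 1 else 0))) I
        + ((if some v ∈ I then (1:ℚ) else 0) + (if some w ∈ I then (1:ℚ) else 0)
          - (if none ∈ I then (1:ℚ) else 0)) := by
  have h : ∑ x ∈ I, (((fun x => Option.elim x (-1) (fun u =>
        K u + (if u = v then 1 else 0) + (if u = w then 1 else 0))) x : ℚ))
      = ∑ x ∈ I, (((fun x => Option.elim x 1 (fun u =>
        K u - (if u = v then 1 else 0) - (if u = w then 1 else 0))) x : ℚ))
        + 2 * ((if some v ∈ I then (1:ℚ) else 0) + (if some w ∈ I then (1:ℚ) else 0)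
          - (if none ∈ I then (1:ℚ) else 0)) := by
    have h2 : ∀ x ∈ I, (((fun x => Option.elim x (-1) (fun u =>
        K u + (if u = v then 1 else 0) + (if u = w then 1 else 0))) x : ℚ))
        = (((fun x => Option.elim x 1 (fun u =>
        K u - (if u = v then 1 else 0) - (if u = w then 1 else 0))) x : ℚ))
          + ((if x = some v then (2:ℚ) else 0) + (if x = some w then (2:ℚ) else 0)
            + (if x = (none : Option ι) then (-2:ℚ) else 0)) := by
      rintro (_ | u) _
      · simp; norm_num
      · by_cases h1 : u = v <;> by_cases h2 : u = w <;>
          simp [h1, h2] <;> split_ifs <;> push_cast <;> ring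
    rw [Finset.sum_congr rfl h2, Finset.sum_add_distrib, Finset.sum_add_distrib,
      Finset.sum_add_distrib, Finset.sum_ite_eq' I (some v) (fun _ => (2:ℚ)),
      Finset.sum_ite_eq' I (some w) (fun _ => (2:ℚ)),
      Finset.sum_ite_eq' I (none : Option ι) (fun _ => (-2:ℚ))]
    split_ifs <;> ring
  simp only [fval]
  rw [h]; ring

/-- In the edge blow-up lattice, comparison of `f` for `(K,p+1,q+1,-1)` and
`(K,p-1,q-1,1)` on sets avoiding `v, w, e`, and the consequence that when the
corresponding `g`-values agree, every minimizer avoids `v` and `w`. -/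
theorem stmt18 {ι : Type*} [DecidableEq ι] (B : ι → ι → ℤ)
    (hsym : ∀ a b, B a b = B b a)
    (v w : ι) (hvw : v ≠ w) (hedge : B v w = 1)
    (K : ι → ℤ) :
    (∀ I : Finset ι, v ∉ I → w ∉ I →
      (fval (blowUpForm B v w)
          (fun x => x.elim (-1) (fun u =>
            K u + (if u = v then 1 else 0) + (if u = w then 1 else 0))) (I.image some)
        = fval (blowUpForm B v w)
          (fun x => x.elim 1 (fun u =>
            K u - (if u = v then 1 else 0) - (if u = w then 1 else 0))) (I.image some)) ∧
      (fval (blowUpForm B v w)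
          (fun x => x.elim (-1) (fun u =>
            K u + (if u = v then 1 else 0) + (if u = w then 1 else 0)))
          (insert (some v) (I.image some))
        = fval (blowUpForm B v w)
          (fun x => x.elim 1 (fun u =>
            K u - (if u = v then 1 else 0) - (if u = w then 1 else 0)))
          (insert (some v) (I.image some)) + 1) ∧
      (fval (blowUpForm B v w)
          (fun x => x.elim (-1) (fun u =>
            K u + (if u = v then 1 else 0) + (if u = w then 1 else 0)))
          (insert (some w) (I.image some))
        = fval (blowUpForm B v w)
          (fun x => x.elim 1 (fun u =>
            K u - (if u = v then 1 else 0) - (if u = w then 1 else 0)))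
          (insert (some w) (I.image some)) + 1) ∧
      (fval (blowUpForm B v w)
          (fun x => x.elim (-1) (fun u =>
            K u + (if u = v then 1 else 0) + (if u = w then 1 else 0)))
          (insert (some v) (insert (some w) (I.image some)))
        = fval (blowUpForm B v w)
          (fun x => x.elim 1 (fun u =>
            K u - (if u = v then 1 else 0) - (if u = w then 1 else 0)))
          (insert (some v) (insert (some w) (I.image some))) + 2)) ∧
    (∀ E : Finset (Option ι), none ∉ E →
      gval (blowUpForm B v w)
          (fun x => x.elim (-1) (fun u =>
            K u + (if u = v then 1 else 0) + (if u = w then 1 else 0))) E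
        = gval (blowUpForm B v w)
          (fun x => x.elim 1 (fun u =>
            K u - (if u = v then 1 else 0) - (if u = w then 1 else 0))) E →
      ∀ I ⊆ E,
        fval (blowUpForm B v w)
            (fun x => x.elim (-1) (fun u =>
              K u + (if u = v then 1 else 0) + (if u = w then 1 else 0))) I
          = gval (blowUpForm B v w)
            (fun x => x.elim (-1) (fun u =>
              K u + (if u = v then 1 else 0) + (if u = w then 1 else 0))) E →
        some v ∉ I ∧ some w ∉ I) := by
  constructor
  · intro I hv hw
    have h1 := key_diff (blowUpForm B v w) v w K (I.image some)
    have h2 := key_diff (blowUpForm B v w) v w K (insert (some v) (I.image some))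
    have h3 := key_diff (blowUpForm B v w) v w K (insert (some w) (I.image some))
    have h4 := key_diff (blowUpForm B v w) v w K
      (insert (some v) (insert (some w) (I.image some)))
    simp [Finset.mem_image, hv, hw, hvw, hvw.symm] at h1 h2 h3 h4
    refine ⟨by linarith, by linarith, by linarith, by linarith⟩
  · intro E hne hg I hIE hf
    have hnI : none ∉ I := fun h => hne (hIE h)
    have hk := key_diff (blowUpForm B v w) v w K I
    have hle : gval (blowUpForm B v w)
        (fun x => x.elim 1 (fun u =>
          K u - (if u = v then 1 else 0) - (if u = w then 1 else 0))) E
        ≤ fval (blowUpForm B v w)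
        (fun x => x.elim 1 (fun u =>
          K u - (if u = v then 1 else 0) - (if u = w then 1 else 0))) I :=
      Finset.inf'_le _ (Finset.mem_powerset.2 hIE)
    rw [if_neg hnI] at hk
    have hc : (if some v ∈ I then (1:ℚ) else 0) + (if some w ∈ I then (1:ℚ) else 0) ≤ 0 := by
      linarith
    constructor <;> intro h <;> rw [if_pos h] at hc <;> split_ifs at hc <;> linarith
end
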